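/- Suppose a nonnegative sequence (x_t) and constants γ ∈ (0,1), C ≥ 0, and a nonnegative sequence (Δ_t) satisfy, for all t ≥ τ+1, x_{t+1} ≤ ((1+γ)/2)·x_{t−τ} + C·∑_{s=0}^{τ} Δ_{t−s}. If Δ_t → 0 geometrically with rate q satisfying ((1+γ)/2)^{1/(τ+1)} < q < 1 (i.e., Δ_t ≤ D q^t), then x_t ≤ D' q^t for some constant D' and all t. -/
import Mathlib


theorem multi_step_contraction_geometric (x Δ : ℕ → ℝ) (τ : ℕ) (γ C D q : ℝ)
    (hγ0 : 0 < γ) (hγ1 : γ < 1) (hC : 0 ≤ C) (hD : 0 ≤ D)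
    (hx_nonneg : ∀ t, 0 ≤ x t) (hΔ_nonneg : ∀ t, 0 ≤ Δ t)
    (hrec : ∀ t, τ + 1 ≤ t →
      x (t + 1) ≤ ((1 + γ) / 2) * x (t - τ) + C * ∑ s ∈ Finset.range (τ + 1), Δ (t - s))
    (hq_lo : ((1 + γ) / 2) ^ ((1 : ℝ) / (τ + 1 : ℝ)) < q) (hq_hi : q < 1)
    (hΔ : ∀ t, Δ t ≤ D * q ^ t) :
    ∃ D' : ℝ, ∀ t, x t ≤ D' * q ^ t := by
  have hρ0 : (0:ℝ) < (1+γ)/2 := by linarith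
  have hq0 : 0 < q := lt_trans (Real.rpow_pos_of_pos hρ0 _) hq_lo
  have key : (1+γ)/2 < q ^ (τ+1) := by
    have h := Real.rpow_lt_rpow (Real.rpow_nonneg hρ0.le _) hq_lo
      (show (0:ℝ) < ((τ+1:ℕ):ℝ) by positivity)
    rwa [Real.rpow_natCast q (τ+1), ← Real.rpow_mul hρ0.le,
      show ((1:ℝ)/(τ+1:ℝ)) * ((τ+1:ℕ):ℝ) = 1 by push_cast; field_simp,
      Real.rpow_one] at h
  set E : ℝ := C * (τ+1) * D with hE
  have hE0 : 0 ≤ E := by positivity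
  set M : ℝ := (Finset.range (τ+2)).sup' (by simp) (fun t => x t / q ^ t) with hM
  refine ⟨max M (E / (q ^ (τ+1) - (1+γ)/2)), ?_⟩
  set D' : ℝ := max M (E / (q ^ (τ+1) - (1+γ)/2)) with hD'
  intro t
  induction t using Nat.strong_induction_on with
  | _ t ih =>
    rcases le_or_gt t (τ+1) with ht | ht
    · have hle : x t / q ^ t ≤ M :=
        Finset.le_sup' (fun t => x t / q ^ t) (Finset.mem_range.mpr (by omega))
      have h2 : x t / q ^ t ≤ D' := hle.trans (le_max_left _ _)
      have hqt : (0:ℝ) < q ^ t := by positivity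
      calc x t = (x t / q ^ t) * q ^ t := by field_simp
        _ ≤ D' * q ^ t := mul_le_mul_of_nonneg_right h2 hqt.le
    · obtain ⟨n, rfl⟩ : ∃ n, t = n + 1 := ⟨t-1, by omega⟩
      have hn : τ + 1 ≤ n := by omega
      have hsum : ∑ s ∈ Finset.range (τ+1), Δ (n - s) ≤ (τ+1) * (D * q ^ (n - τ)) := by
        calc ∑ s ∈ Finset.range (τ+1), Δ (n - s)
            ≤ ∑ _s ∈ Finset.range (τ+1), D * q ^ (n - τ) := by
              apply Finset.sum_le_sum
              intro s hs
              have hs' : s ≤ τ := Nat.lt_succ_iff.mp (Finset.mem_range.mp hs)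
              calc Δ (n - s) ≤ D * q ^ (n - s) := hΔ _
                _ ≤ D * q ^ (n - τ) := by
                  apply mul_le_mul_of_nonneg_left _ hD
                  exact pow_le_pow_of_le_one hq0.le hq_hi.le (by omega)
          _ = (τ+1) * (D * q ^ (n - τ)) := by
              rw [Finset.sum_const, Finset.card_range]; push_cast; ring
      have hx' : x (n - τ) ≤ D' * q ^ (n - τ) := ih _ (by omega)
      have hD'2 : E / (q ^ (τ+1) - (1+γ)/2) ≤ D' := le_max_right _ _
      have hkey' : (0:ℝ) < q ^ (τ+1) - (1+γ)/2 := by linarith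
      have hEbound : E ≤ D' * (q ^ (τ+1) - (1+γ)/2) := by
        rw [div_le_iff₀ hkey'] at hD'2; linarith
      have hq' : q ^ (n+1) = q ^ (τ+1) * q ^ (n - τ) := by
        rw [← pow_add]; congr 1; omega
      have hpos : (0:ℝ) < q ^ (n - τ) := by positivity
      calc x (n+1) ≤ (1+γ)/2 * x (n-τ) + C * ∑ s ∈ Finset.range (τ+1), Δ (n-s) := hrec n hn
        _ ≤ (1+γ)/2 * (D' * q ^ (n-τ)) + C * ((τ+1) * (D * q ^ (n - τ))) := by
            gcongr
        _ = ((1+γ)/2 * D' + E) * q ^ (n-τ) := by rw [hE]; ring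
        _ ≤ (D' * q ^ (τ+1)) * q ^ (n-τ) := by
            apply mul_le_mul_of_nonneg_right _ hpos.le
            nlinarith [hEbound]
        _ = D' * q ^ (n+1) := by rw [hq']; ring
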